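/- arXiv:1311.6270 — 2 statements merged into one kernel-verified Lean document; each statement's English description precedes it below -/
import Mathlib

section
/- Let ω be a trace-class operator on L²(ℝ³) with 0 ≤ ω ≤ 1 and let V ∈ L¹(ℝ³) have integrable Fourier transform V̂. Define the exchange operator X via X = N^{-1} ∫ V̂(q) e^{iq·x} ω e^{-iq·x} dq. Then tr|[ω, [X, x_j]]| ≤ (2‖V̂‖₁ / N) · tr|[ω, x_j]| for each coordinate j. -/
/-!
Conjugation by the unitary `e^{iq·x}` commutes with `[·, xⱼ]` and does not increase the trace
norm, so the integrand of `[X, xⱼ]` has trace norm at most `|V̂(q)| tr|[ω, xⱼ]|`; integrating gives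
`tr|[X, xⱼ]| ≤ N⁻¹ ‖V̂‖₁ tr|[ω, xⱼ]|`, and the outer commutator with `ω` costs a factor
`2‖ω‖ ≤ 2`.
-/

open MeasureTheory

section TraceNormBounds

variable {𝕜 M : Type*}

lemma nonneg_of_map_sub_le_of_map_smul [NormedField 𝕜] [AddCommGroup M] [Module 𝕜 M]
    (f : M → ℝ) (f_sub : ∀ A B, f (A - B) ≤ f A + f B)
    (f_smul : ∀ (c : 𝕜) A, f (c • A) = ‖c‖ * f A) (A : M) : 0 ≤ f A := by
  have f_zero : f 0 = 0 := by simpa using f_smul 0 0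
  have := f_sub A A
  rw [sub_self, f_zero] at this
  linarith

lemma map_real_smul_of_map_smul [RCLike 𝕜] [AddCommGroup M] [Module 𝕜 M] [Module ℝ M]
    [IsScalarTower ℝ 𝕜 M] (f : M → ℝ) (f_smul : ∀ (c : 𝕜) A, f (c • A) = ‖c‖ * f A)
    (c : ℝ) (A : M) : f (c • A) = |c| * f A := by
  rw [RCLike.real_smul_eq_coe_smul (K := 𝕜), f_smul, RCLike.norm_ofReal]

variable {E : Type*}

lemma map_mul_mul_le [NonUnitalNormedRing E] (f : E → ℝ)
    (f_mul_left : ∀ A B, f (A * B) ≤ ‖A‖ * f B) (f_mul_right : ∀ A B, f (A * B) ≤ f A * ‖B‖)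
    (U A V : E) : f (U * A * V) ≤ ‖U‖ * f A * ‖V‖ :=
  calc f (U * A * V) ≤ f (U * A) * ‖V‖ := f_mul_right _ _
    _ ≤ ‖U‖ * f A * ‖V‖ := by gcongr; exact f_mul_left _ _

lemma norm_le_one_of_mem_unitary [NormedRing E] [StarRing E] [CStarRing E] {U : E}
    (hU : U ∈ unitary E) : ‖U‖ ≤ 1 := by
  rcases subsingleton_or_nontrivial E with _ | _
  · simp [Subsingleton.elim U 0]
  · exact (CStarRing.norm_of_mem_unitary hU).le

lemma map_unitary_conj_le [NormedRing E] [StarRing E] [CStarRing E] (f : E → ℝ)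
    (f_nonneg : ∀ A, 0 ≤ f A) (f_mul_left : ∀ A B, f (A * B) ≤ ‖A‖ * f B)
    (f_mul_right : ∀ A B, f (A * B) ≤ f A * ‖B‖) {U : E} (hU : U ∈ unitary E) (A : E) :
    f (U * A * star U) ≤ f A := by
  have hU_norm := norm_le_one_of_mem_unitary hU
  have hU_star_norm : ‖star U‖ ≤ 1 := by rwa [norm_star]
  calc f (U * A * star U) ≤ ‖U‖ * f A * ‖star U‖ :=
        map_mul_mul_le f f_mul_left f_mul_right _ _ _
    _ ≤ 1 * f A * 1 := by have := f_nonneg A; gcongr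
    _ = f A := by ring

lemma map_commutator_le [NonUnitalNormedRing E] (f : E → ℝ) (f_nonneg : ∀ A, 0 ≤ f A)
    (f_sub : ∀ A B, f (A - B) ≤ f A + f B) (f_mul_left : ∀ A B, f (A * B) ≤ ‖A‖ * f B)
    (f_mul_right : ∀ A B, f (A * B) ≤ f A * ‖B‖) (w C : E) :
    f (w * C - C * w) ≤ 2 * ‖w‖ * f C := by
  have := f_nonneg C
  calc f (w * C - C * w) ≤ f (w * C) + f (C * w) := f_sub _ _
    _ ≤ ‖w‖ * f C + f C * ‖w‖ := add_le_add (f_mul_left _ _) (f_mul_right _ _)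
    _ = 2 * ‖w‖ * f C := by ring

lemma map_integral_smul_le {α : Type*} [MeasurableSpace α] {μ : Measure α} [RCLike 𝕜]
    [NormedAddCommGroup E] [NormedSpace ℝ E] [NormedSpace 𝕜 E] (f : E → ℝ)
    (f_smul : ∀ (c : 𝕜) A, f (c • A) = ‖c‖ * f A)
    (f_integral : ∀ (F : α → E) (g : α → ℝ), Integrable g μ → (∀ q, f (F q) ≤ g q) →
      f (∫ q, F q ∂μ) ≤ ∫ q, g q ∂μ)
    {c : α → 𝕜} (hc : Integrable c μ) {F : α → E} {K : ℝ} (hF : ∀ q, f (F q) ≤ K) :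
    f (∫ q, c q • F q ∂μ) ≤ (∫ q, ‖c q‖ ∂μ) * K := by
  rw [← integral_mul_const]
  refine f_integral _ _ (hc.norm.mul_const K) fun q => ?_
  rw [f_smul]
  exact mul_le_mul_of_nonneg_left (hF q) (norm_nonneg _)

end TraceNormBounds

theorem stmt5_general {H : Type*} [NormedAddCommGroup H] [InnerProductSpace ℂ H] [CompleteSpace H]
    (trN : (H →L[ℂ] H) → ℝ)
    (trN_sub : ∀ A B, trN (A - B) ≤ trN A + trN B)
    (trN_smul : ∀ (c : ℂ) A, trN (c • A) = ‖c‖ * trN A)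
    (trN_mul_left : ∀ A B, trN (A * B) ≤ ‖A‖ * trN B)
    (trN_mul_right : ∀ A B, trN (A * B) ≤ trN A * ‖B‖)
    (trN_integral : ∀ (f : EuclideanSpace ℝ (Fin 3) → H →L[ℂ] H)
      (g : EuclideanSpace ℝ (Fin 3) → ℝ), Integrable g → (∀ q, trN (f q) ≤ g q) →
      trN (∫ q, f q) ≤ ∫ q, g q)
    (ω : H →L[ℂ] H) (hω_norm : ‖ω‖ ≤ 1)
    (N : ℝ) (hN : 0 < N)
    (Vhat : EuclideanSpace ℝ (Fin 3) → ℂ) (hVint : Integrable Vhat)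
    (E : EuclideanSpace ℝ (Fin 3) → H →L[ℂ] H)
    (hEunit : ∀ q, E q ∈ unitary (H →L[ℂ] H))
    (commX : (H →L[ℂ] H) →ₗ[ℂ] (H →L[ℂ] H))
    (hconj : ∀ q A, commX (E q * A * star (E q)) = E q * commX A * star (E q))
    (X : H →L[ℂ] H)
    (hcommX_int : commX X = N⁻¹ • ∫ q, Vhat q • commX (E q * ω * star (E q))) :
    trN (ω * commX X - commX X * ω) ≤ 2 * (∫ q, ‖Vhat q‖) / N * trN (commX ω) := by
  have trN_nonneg := nonneg_of_map_sub_le_of_map_smul trN trN_sub trN_smul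
  have conj_bound : ∀ q, trN (commX (E q * ω * star (E q))) ≤ trN (commX ω) := fun q => by
    rw [hconj]
    exact map_unitary_conj_le trN trN_nonneg trN_mul_left trN_mul_right (hEunit q) _
  have commX_bound : trN (commX X) ≤ N⁻¹ * ((∫ q, ‖Vhat q‖) * trN (commX ω)) := by
    rw [hcommX_int, map_real_smul_of_map_smul trN trN_smul, abs_of_pos (inv_pos.mpr hN)]
    gcongr
    exact map_integral_smul_le trN trN_smul trN_integral hVint conj_bound
  have := trN_nonneg (commX X)
  calc trN (ω * commX X - commX X * ω) ≤ 2 * ‖ω‖ * trN (commX X) :=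
        map_commutator_le trN trN_nonneg trN_sub trN_mul_left trN_mul_right _ _
    _ ≤ 2 * 1 * (N⁻¹ * ((∫ q, ‖Vhat q‖) * trN (commX ω))) := by gcongr
    _ = 2 * (∫ q, ‖Vhat q‖) / N * trN (commX ω) := by field_simp

/-- Exchange-term commutator bound. Let `ω` be trace class with `0 ≤ ω ≤ 1` (so in
particular `‖ω‖ ≤ 1`) and `V̂` integrable, and let
`X = N⁻¹ ∫ V̂(q) e^{iq·x} ω e^{-iq·x} dq` be the exchange operator. Then
`tr|[ω, [X, xⱼ]]| ≤ (2‖V̂‖₁/N) tr|[ω, xⱼ]|`. Here `E q` is the unitary multiplication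
by `e^{iq·x}`, `commX A = [A, xⱼ]` is the commutator with the `j`-th position operator,
which satisfies the conjugation identity
`[e^{iq·x} A e^{-iq·x}, xⱼ] = e^{iq·x} [A, xⱼ] e^{-iq·x}` and commutes with the
integral; the trace norm `trN` is axiomatized by its standard properties. -/
theorem stmt5 {H : Type*} [NormedAddCommGroup H] [InnerProductSpace ℂ H] [CompleteSpace H]
    (trN : (H →L[ℂ] H) → ℝ)
    (trN_nonneg : ∀ A, 0 ≤ trN A)
    (trN_sub : ∀ A B, trN (A - B) ≤ trN A + trN B)
    (trN_smul : ∀ (c : ℂ) A, trN (c • A) = ‖c‖ * trN A)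
    (trN_smul_real : ∀ (c : ℝ) A, trN (c • A) = |c| * trN A)
    (trN_mul_left : ∀ A B, trN (A * B) ≤ ‖A‖ * trN B)
    (trN_mul_right : ∀ A B, trN (A * B) ≤ trN A * ‖B‖)
    (trN_integral : ∀ (f : EuclideanSpace ℝ (Fin 3) → H →L[ℂ] H)
      (g : EuclideanSpace ℝ (Fin 3) → ℝ), Integrable g → (∀ q, trN (f q) ≤ g q) →
      trN (∫ q, f q) ≤ ∫ q, g q)
    (ω : H →L[ℂ] H) (hω_sa : IsSelfAdjoint ω) (hω_pos : ω.IsPositive)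
    (hω_le : (1 - ω).IsPositive) (hω_norm : ‖ω‖ ≤ 1)
    (N : ℝ) (hN : 0 < N)
    (Vhat : EuclideanSpace ℝ (Fin 3) → ℂ) (hVint : Integrable Vhat)
    (E : EuclideanSpace ℝ (Fin 3) → H →L[ℂ] H)
    (hEunit : ∀ q, E q ∈ unitary (H →L[ℂ] H))
    (commX : (H →L[ℂ] H) →ₗ[ℂ] (H →L[ℂ] H))
    (hconj : ∀ q A, commX (E q * A * star (E q)) = E q * commX A * star (E q))
    (X : H →L[ℂ] H)
    (hX : X = N⁻¹ • ∫ q, Vhat q • (E q * ω * star (E q)))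
    (hcommX_int : commX X = N⁻¹ • ∫ q, Vhat q • commX (E q * ω * star (E q))) :
    trN (ω * commX X - commX X * ω) ≤ 2 * (∫ q, ‖Vhat q‖) / N * trN (commX ω) :=
  stmt5_general trN trN_sub trN_smul trN_mul_left trN_mul_right trN_integral ω hω_norm N hN Vhat
    hVint E hEunit commX hconj X hcommX_int
end

section
/- Let h(t) be a (time-dependent, self-adjoint) bounded operator family generating a unitary two-parameter propagator W(t,s) via iε∂_t W(t,s) = h(t)W(t,s), W(s,s) = 1, and let ω solve the commutator equation iε∂_tω = [h(t), ω]. Then for any fixed bounded operator B, W*(t,0)[B,ω(t)]W(t,0) = [B,ω(0)] + (iε)^{-1}∫₀ᵗ W*(s,0)[ω(s),[h(s),B]]W(s,0) ds, so tr|[B,ω(t)]| ≤ tr|[B,ω(0)]| + ε^{-1}∫₀ᵗ tr|[ω(s),[h(s),B]]| ds. -/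
open MeasureTheory

/-- Propagation identity along a Heisenberg-type flow. Let `W(t,s)` be the unitary
propagator of the norm-continuous self-adjoint family `h(t)`, `iε ∂ₜ W(t,s) = h(t) W(t,s)`,
`W(s,s) = 1`, and let `ω(t)` solve `iε ∂ₜ ω = [h(t), ω]`. Then for every fixed bounded
operator `B`:
`W*(t,0) [B, ω(t)] W(t,0) = [B, ω(0)] + (iε)⁻¹ ∫₀ᵗ W*(s,0) [ω(s), [h(s), B]] W(s,0) ds`,
and consequently
`tr|[B, ω(t)]| ≤ tr|[B, ω(0)]| + ε⁻¹ ∫₀ᵗ tr|[ω(s), [h(s), B]]| ds`. -/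
theorem stmt14 {H : Type*} [NormedAddCommGroup H] [InnerProductSpace ℂ H] [CompleteSpace H]
    (trN : (H →L[ℂ] H) → ℝ)
    (trN_nonneg : ∀ A, 0 ≤ trN A)
    (trN_add : ∀ A B, trN (A + B) ≤ trN A + trN B)
    (trN_smul : ∀ (c : ℂ) A, trN (c • A) = ‖c‖ * trN A)
    (trN_conj : ∀ (U A : H →L[ℂ] H), U ∈ unitary (H →L[ℂ] H) →
      trN (U * A * star U) = trN A)
    (trN_integral : ∀ (f : ℝ → H →L[ℂ] H) (t : ℝ), Continuous f →
      trN (∫ s in (0 : ℝ)..t, f s) ≤ |∫ s in (0 : ℝ)..t, trN (f s)|)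
    (ε : ℝ) (hε : 0 < ε)
    (h ω : ℝ → H →L[ℂ] H) (W : ℝ → ℝ → H →L[ℂ] H)
    (hh_sa : ∀ t, IsSelfAdjoint (h t)) (hh_cont : Continuous h)
    (hW_unit : ∀ t s, W t s ∈ unitary (H →L[ℂ] H))
    (hW_init : ∀ s, W s s = 1)
    (hW_cont : Continuous fun t => W t 0)
    (hW_deriv : ∀ s t, HasDerivAt (fun u => W u s)
      ((Complex.I * (ε : ℂ))⁻¹ • (h t * W t s)) t)
    (hω_deriv : ∀ t, HasDerivAt ω
      ((Complex.I * (ε : ℂ))⁻¹ • (h t * ω t - ω t * h t)) t)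
    (hω_cont : Continuous ω)
    (B : H →L[ℂ] H) :
    ∀ t : ℝ,
      star (W t 0) * (B * ω t - ω t * B) * W t 0
        = (B * ω 0 - ω 0 * B) + (Complex.I * (ε : ℂ))⁻¹ •
            ∫ s in (0 : ℝ)..t,
              star (W s 0) *
                (ω s * (h s * B - B * h s) - (h s * B - B * h s) * ω s) * W s 0
      ∧ trN (B * ω t - ω t * B)
          ≤ trN (B * ω 0 - ω 0 * B)
            + ε⁻¹ * |∫ s in (0 : ℝ)..t,
                trN (ω s * (h s * B - B * h s) - (h s * B - B * h s) * ω s)| := by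
  intro t
  set c : ℂ := (Complex.I * (ε : ℂ))⁻¹ with hc_def
  -- basic facts about c
  have hc_conj : (starRingEnd ℂ) c = -c := by
    simp [hc_def, map_inv₀, map_mul, Complex.conj_I, Complex.conj_ofReal, neg_mul, inv_neg]
  have hc_norm : ‖c‖ = ε⁻¹ := by
    rw [hc_def, norm_inv, norm_mul, Complex.norm_I, one_mul, Complex.norm_real,
      Real.norm_eq_abs, abs_of_pos hε]
  -- abbreviations
  set C : ℝ → (H →L[ℂ] H) := fun u => B * ω u - ω u * B with hC_def
  set X : ℝ → (H →L[ℂ] H) := fun u =>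
    ω u * (h u * B - B * h u) - (h u * B - B * h u) * ω u with hX_def
  set G : ℝ → (H →L[ℂ] H) := fun u => star (W u 0) * X u * W u 0 with hG_def
  set F : ℝ → (H →L[ℂ] H) := fun u => star (W u 0) * C u * W u 0 with hF_def
  -- derivative of star (W u 0)
  have hS_deriv : ∀ u, HasDerivAt (fun v => star (W v 0))
      ((-c) • (star (W u 0) * h u)) u := by
    intro u
    have := (hW_deriv 0 u).star
    rwa [star_smul, star_mul, (hh_sa u).star_eq, Complex.star_def, hc_conj] at this
  -- derivative of C
  have hC_deriv : ∀ u, HasDerivAt C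
      (B * (c • (h u * ω u - ω u * h u)) - (c • (h u * ω u - ω u * h u)) * B) u := by
    intro u
    exact ((hω_deriv u).const_mul B).sub ((hω_deriv u).mul_const B)
  -- derivative of F
  have hF_deriv : ∀ u, HasDerivAt F (c • G u) u := by
    intro u
    have h1 := ((hS_deriv u).mul (hC_deriv u)).mul (hW_deriv 0 u)
    refine HasDerivAt.congr_deriv h1 ?_
    symm
    simp only [hG_def, hX_def, hC_def, Pi.mul_apply]
    have key : star (W u 0) * (ω u * (h u * B - B * h u) - (h u * B - B * h u) * ω u)
          * W u 0
        = -(star (W u 0) * h u * (B * ω u - ω u * B) * W u 0)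
          + (star (W u 0) * (B * (h u * ω u - ω u * h u)) * W u 0
            - star (W u 0) * ((h u * ω u - ω u * h u) * B) * W u 0)
          + star (W u 0) * (B * ω u - ω u * B) * (h u * W u 0) := by
      noncomm_ring
    rw [key]
    simp only [smul_add, smul_sub, smul_neg, neg_smul, smul_mul_assoc, mul_smul_comm,
      mul_sub, sub_mul, add_mul, neg_mul, mul_neg, mul_assoc]
    abel
  -- continuity of G
  have hG_cont : Continuous G := by
    apply Continuous.mul
    apply Continuous.mul hW_cont.star
    · exact ((hω_cont.mul ((hh_cont.mul continuous_const).sub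
        (continuous_const.mul hh_cont))).sub
        (((hh_cont.mul continuous_const).sub (continuous_const.mul hh_cont)).mul hω_cont))
    · exact hW_cont
  -- fundamental theorem of calculus
  have hFTC : ∫ s in (0:ℝ)..t, c • G s = F t - F 0 := by
    apply intervalIntegral.integral_eq_sub_of_hasDerivAt
    · exact fun u _ => hF_deriv u
    · exact (hG_cont.const_smul c).intervalIntegrable 0 t
  have hF0 : F 0 = C 0 := by
    simp [hF_def, hW_init 0]
  have hident : F t = C 0 + c • ∫ s in (0:ℝ)..t, G s := by
    rw [← intervalIntegral.integral_smul, hFTC, hF0]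
    abel
  refine ⟨hident, ?_⟩
  -- trace estimate
  have hU : star (W t 0) ∈ unitary (H →L[ℂ] H) := Unitary.star_mem (hW_unit t 0)
  have htrF : trN (F t) = trN (C t) := by
    have := trN_conj (star (W t 0)) (C t) hU
    rwa [star_star] at this
  have hpt : ∀ s, trN (G s) = trN (X s) := by
    intro s
    have := trN_conj (star (W s 0)) (X s) (Unitary.star_mem (hW_unit s 0))
    rwa [star_star] at this
  have hInt : trN (∫ s in (0:ℝ)..t, G s) ≤ |∫ s in (0:ℝ)..t, trN (X s)| := by
    have h1 := trN_integral G t hG_cont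
    have h2 : ∫ s in (0:ℝ)..t, trN (G s) = ∫ s in (0:ℝ)..t, trN (X s) := by
      apply intervalIntegral.integral_congr
      intro s _
      exact hpt s
    rwa [h2] at h1
  calc trN (C t) = trN (F t) := htrF.symm
    _ = trN (C 0 + c • ∫ s in (0:ℝ)..t, G s) := by rw [hident]
    _ ≤ trN (C 0) + trN (c • ∫ s in (0:ℝ)..t, G s) := trN_add _ _
    _ = trN (C 0) + ‖c‖ * trN (∫ s in (0:ℝ)..t, G s) := by rw [trN_smul]
    _ ≤ trN (C 0) + ε⁻¹ * |∫ s in (0:ℝ)..t, trN (X s)| := by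
        rw [hc_norm]
        have := mul_le_mul_of_nonneg_left hInt (le_of_lt (inv_pos.mpr hε))
        linarith
end
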